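/- Let H and H' be crossed homomorphisms from g to h with respect to ρ, and let (φ_g, φ_h) be a homomorphism from H' to H with φ_g invertible, i.e. φ_g, φ_h are Lie algebra endomorphisms satisfying H ∘ φ_g = φ_h ∘ H' and φ_h(ρ(x)u) = ρ(φ_g(x))(φ_h(u)). Then the map Φ : Hom(Λ^k g, h) → Hom(Λ^k g, h), f ↦ φ_h ∘ f ∘ (φ_g^{-1})^{⊗k}, is a cochain map from the complex (C*(g,h), d_{ρ_{H'}}) to (C*(g,h), d_{ρ_H}). -/

import Mathlib

/-!
The coboundary `gDH` is assembled from the action `ρ`, the map `H` and the brackets of `g` and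
`h`. A pair of Lie algebra morphisms `(ψ, φ)` intertwining `(ρ', H')` with `(ρ, H)` respects
each of these ingredients, so `gDH` is natural: the coboundary of a transported cochain, evaluated
on `ψ ∘ x`, is `φ` of the original coboundary at `x`. Taking `ψ = φ_g` and evaluating at
`φ_g⁻¹ ∘ x` gives the cochain-map identity.
-/

section

variable {K g h : Type*} [Field K] [CharZero K]
  [LieRing g] [LieAlgebra K g] [LieRing h] [LieAlgebra K h]

/-- The Chevalley–Eilenberg coboundary operator of the representation
`ρ_H x u = ρ x u + ⁅H x, u⁆` on `h`, for a crossed homomorphism `H` (the value on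
`(x₁, …, x_{k+1})`, written using that `f` is alternating). -/
noncomputable def gDH (ρ : g →ₗ[K] Module.End K h) (H : g →ₗ[K] h) {k : ℕ}
    (f : (Fin k → g) → h) : (Fin (k + 1) → g) → h :=
  fun x =>
    (∑ i : Fin (k + 1), ((-1 : ℤ) ^ (i : ℕ)) •
      (ρ (x i) (f (i.removeNth x)) + ⁅H (x i), f (i.removeNth x)⁆)) +
    ∑ j : Fin (k + 1), ∑ i : Fin (j : ℕ),
      ((-1 : ℤ) ^ (j : ℕ)) •
        f (Function.update (j.removeNth x)
            ⟨(i : ℕ), by have := i.isLt; have := j.isLt; omega⟩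
            ⁅x ⟨(i : ℕ), by have := i.isLt; have := j.isLt; omega⟩, x j⁆)

end

section Naturality

variable {K g h g' h' : Type*} [Field K]
  [LieRing g] [LieAlgebra K g] [LieRing h] [LieAlgebra K h]
  [LieRing g'] [LieAlgebra K g'] [LieRing h'] [LieAlgebra K h']
  (ρ : g →ₗ[K] Module.End K h) (ρ' : g' →ₗ[K] Module.End K h')
  (H : g →ₗ[K] h) (H' : g' →ₗ[K] h') (ψ : g' →ₗ⁅K⁆ g) (φ : h' →ₗ⁅K⁆ h)

theorem LieHom.map_twisted_action (hcomm : ∀ x, H (ψ x) = φ (H' x))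
    (hcompat : ∀ x u, φ (ρ' x u) = ρ (ψ x) (φ u)) (x : g') (u : h') :
    φ (ρ' x u + ⁅H' x, u⁆) = ρ (ψ x) (φ u) + ⁅H (ψ x), φ u⁆ := by
  rw [map_add, hcompat, LieHom.map_lie, hcomm]

theorem LieHom.comp_update_lie {n : ℕ} (y : Fin n → g') (i : Fin n) (a b : g') :
    ψ ∘ Function.update y i ⁅a, b⁆ = Function.update (ψ ∘ y) i ⁅ψ a, ψ b⁆ := by
  rw [Function.comp_update, LieHom.map_lie]

theorem gDH_comp_eq_map_gDH (hcomm : ∀ x, H (ψ x) = φ (H' x))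
    (hcompat : ∀ x u, φ (ρ' x u) = ρ (ψ x) (φ u)) {k : ℕ}
    (f : (Fin k → g') → h') (f' : (Fin k → g) → h) (hf : ∀ y, f' (ψ ∘ y) = φ (f y))
    (x : Fin (k + 1) → g') :
    gDH ρ H f' (ψ ∘ x) = φ (gDH ρ' H' f x) := by
  simp only [gDH]
  -- the closing `rfl`s use that `Fin.removeNth i (ψ ∘ x)` is `ψ ∘ Fin.removeNth i x` by definition
  rw [map_add, map_sum, map_sum]
  refine congrArg₂ (· + ·) (Finset.sum_congr rfl fun i _ => ?_)
    (Finset.sum_congr rfl fun j _ => ?_)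
  · rw [map_zsmul, LieHom.map_twisted_action ρ ρ' H H' ψ φ hcomm hcompat, ← hf]
    rfl
  · rw [map_sum]
    refine Finset.sum_congr rfl fun i _ => ?_
    rw [map_zsmul, ← hf, LieHom.comp_update_lie]
    rfl

end Naturality

section

variable {K g h : Type*} [Field K] [CharZero K]
  [LieRing g] [LieAlgebra K g] [LieRing h] [LieAlgebra K h]

theorem conjugation_cochain_map_general
    (ρ : g →ₗ[K] Module.End K h)
    (H H' : g →ₗ[K] h)
    (φg : g ≃ₗ⁅K⁆ g) (φh : h →ₗ⁅K⁆ h)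
    (hcomm : ∀ x : g, H (φg x) = φh (H' x))
    (hcompat : ∀ (x : g) (u : h), φh (ρ x u) = ρ (φg x) (φh u)) :
    ∀ (k : ℕ) (f : (Fin k → g) → h),
      (fun x : Fin (k + 1) → g =>
        φh (gDH ρ H' f fun i => φg.symm (x i))) =
      gDH ρ H (fun x : Fin k → g => φh (f fun i => φg.symm (x i))) := by
  intro k f
  funext x
  have hx : φg.toLieHom ∘ (fun i => φg.symm (x i)) = x :=
    funext fun i => φg.apply_symm_apply (x i)
  rw [← gDH_comp_eq_map_gDH ρ ρ H H' φg.toLieHom φh hcomm hcompat f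
    (fun y => φh (f fun i => φg.symm (y i))) fun y => by simp, hx]

/-- let `H`, `H'` be crossed homomorphisms from `g` to `h` with respect
to `ρ` and `(φ_g, φ_h)` a homomorphism from `H'` to `H` with `φ_g` invertible. Then
`Φ : f ↦ φ_h ∘ f ∘ (φ_g⁻¹)^{⊗k}` is a cochain map from `(C*(g,h), d_{ρ_{H'}})` to
`(C*(g,h), d_{ρ_H})`. -/
theorem conjugation_cochain_map
    (ρ : g →ₗ[K] Module.End K h)
    (hder : ∀ (x : g) (u v : h), ρ x ⁅u, v⁆ = ⁅ρ x u, v⁆ + ⁅u, ρ x v⁆)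
    (hhom : ∀ (x y : g) (u : h), ρ ⁅x, y⁆ u = ρ x (ρ y u) - ρ y (ρ x u))
    (H H' : g →ₗ[K] h)
    (hH : ∀ x y : g, H ⁅x, y⁆ = ρ x (H y) - ρ y (H x) + ⁅H x, H y⁆)
    (hH' : ∀ x y : g, H' ⁅x, y⁆ = ρ x (H' y) - ρ y (H' x) + ⁅H' x, H' y⁆)
    (φg : g ≃ₗ⁅K⁆ g) (φh : h →ₗ⁅K⁆ h)
    (hcomm : ∀ x : g, H (φg x) = φh (H' x))
    (hcompat : ∀ (x : g) (u : h), φh (ρ x u) = ρ (φg x) (φh u)) :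
    ∀ (k : ℕ) (f : (Fin k → g) → h),
      (fun x : Fin (k + 1) → g =>
        φh (gDH ρ H' f fun i => φg.symm (x i))) =
      gDH ρ H (fun x : Fin k → g => φh (f fun i => φg.symm (x i))) :=
  conjugation_cochain_map_general ρ H H' φg φh hcomm hcompat

end
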